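/- arXiv:2501.04645 — 5 statements merged into one kernel-verified Lean document; each statement's English description precedes it below -/
import Mathlib

section
/- Let c ∈ ℂ \ {0} and let s ∈ ℂ with s² = c (so s = √c ≠ 0). Let f : ℂ → ℂ satisfy f(s) = s and f(−z) = −f(z) for all z ∈ ℂ. Define τ(z) = (z + s)/(z − s), τ⁻¹(z) = s(z + 1)/(z − 1) and f̃(z) = τ(f(τ⁻¹(z))). Then for every z ∈ ℂ with z ≠ 0 and z ≠ 1 one has f̃(z) = 1/f̃(1/z) (division by zero is interpreted with the convention x/0 = 0). -/
/-! The substitution `z ↦ 1/z` becomes `w ↦ -w` under `τ⁻¹`, and `w ↦ -w` becomes `z ↦ 1/z`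
under `τ`; oddness of `f` lets the two substitutions pass through `f̃ = τ ∘ f ∘ τ⁻¹`. -/

theorem div_neg_sub_neg_eq_inv {K : Type*} [Field K] (s w : K) :
    (-w + s) / (-w - s) = ((w + s) / (w - s))⁻¹ := by
  rw [inv_div, ← neg_div_neg_eq]
  ring_nf

theorem mul_one_div_add_one_div_sub_one {K : Type*} [Field K] (s z : K) (hz : z ≠ 0) :
    s * (1 / z + 1) / (1 / z - 1) = -(s * (z + 1) / (z - 1)) := by
  rw [← div_neg, ← mul_div_mul_right _ _ hz]
  congr 1 <;> field_simp <;> ring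

theorem stmt5_general (s : ℂ)
    (f : ℂ → ℂ) (hodd : ∀ z : ℂ, f (-z) = -f z)
    (tau tauInv ftilde : ℂ → ℂ)
    (htau : ∀ z : ℂ, tau z = (z + s) / (z - s))
    (htauInv : ∀ z : ℂ, tauInv z = s * (z + 1) / (z - 1))
    (hftilde : ∀ z : ℂ, ftilde z = tau (f (tauInv z))) :
    ∀ z : ℂ, z ≠ 0 → z ≠ 1 → ftilde z = 1 / ftilde (1 / z) := by
  intro z hz _
  have tauInv_one_div : tauInv (1 / z) = -tauInv z := by
    rw [htauInv, htauInv, mul_one_div_add_one_div_sub_one s z hz]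
  rw [hftilde, hftilde, tauInv_one_div, hodd, htau, htau, div_neg_sub_neg_eq_inv, one_div, inv_inv]

/-- Let `c ≠ 0`, `s² = c`, and let `f : ℂ → ℂ` satisfy `f(s) = s` and
`f(−z) = −f(z)`. With `τ(z) = (z+s)/(z−s)`, `τ⁻¹(z) = s(z+1)/(z−1)` and
`f̃ = τ ∘ f ∘ τ⁻¹`, one has `f̃(z) = 1/f̃(1/z)` for all `z ≠ 0, 1`
(division by zero yields 0). -/
theorem stmt5 (c s : ℂ) (hc : c ≠ 0) (hs : s ^ 2 = c)
    (f : ℂ → ℂ) (hfs : f s = s) (hodd : ∀ z : ℂ, f (-z) = -f z)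
    (tau tauInv ftilde : ℂ → ℂ)
    (htau : ∀ z : ℂ, tau z = (z + s) / (z - s))
    (htauInv : ∀ z : ℂ, tauInv z = s * (z + 1) / (z - 1))
    (hftilde : ∀ z : ℂ, ftilde z = tau (f (tauInv z))) :
    ∀ z : ℂ, z ≠ 0 → z ≠ 1 → ftilde z = 1 / ftilde (1 / z) :=
  stmt5_general s f hodd tau tauInv ftilde htau htauInv hftilde
end

section
/- Let n ≥ 1 and let p, q be coprime polynomials over ℂ with max(natDegree p, natDegree q) = n, with p(1) = q(1) and q(1) ≠ 0, and satisfying the polynomial identity p·(reflect n p) = q·(reflect n q). Then q = reflect n p. -/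
/-!
Writing `p*` for `reflect n p`, coprimality turns `p · p* = q · q*` into `p* = q · a` and
`q* = p · a` for a single cofactor `a`. Since `p*` has degree at most `n`, `deg q + deg a ≤ n`,
and symmetrically `deg p + deg a ≤ n`; as one of `p`, `q` has degree exactly `n`, the cofactor
is a constant `c`. Reflection fixes the
value at `1`, so `p(1) = c · q(1)`, and `p(1) = q(1) ≠ 0` forces `c = 1`.
-/

open Polynomial

theorem IsCoprime.exists_eq_mul_and_eq_mul_of_mul_eq_mul {R : Type*} [CommRing R] [IsDomain R]
    {p q p' q' : R} (hcop : IsCoprime p q) (hp : p ≠ 0) (hq : q ≠ 0) (h : p * p' = q * q') :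
    ∃ a, p' = q * a ∧ q' = p * a := by
  obtain ⟨a, ha⟩ := hcop.symm.dvd_of_dvd_mul_left ⟨q', h⟩
  obtain ⟨b, hb⟩ := hcop.dvd_of_dvd_mul_left ⟨p', h.symm⟩
  have hab : a = b := by
    refine mul_left_cancel₀ (mul_ne_zero hp hq) ?_
    linear_combination (-p) * ha + h + q * hb
  exact ⟨a, ha, hab ▸ hb⟩

namespace Polynomial

variable {R : Type*}

theorem natDegree_add_natDegree_le_of_reflect_eq_mul [Semiring R] [NoZeroDivisors R]
    {N : ℕ} {f g a : R[X]} (hf : f.natDegree ≤ N) (hg : g ≠ 0) (ha : a ≠ 0)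
    (h : f.reflect N = g * a) : g.natDegree + a.natDegree ≤ N := by
  rw [← natDegree_mul hg ha, ← h]
  exact natDegree_reflect_le.trans (max_eq_left hf).le

theorem eval_one_reflect [CommSemiring R] {N : ℕ} {f : R[X]} (hf : f.natDegree ≤ N) :
    (f.reflect N).eval 1 = f.eval 1 := by
  let _ : Invertible (1 : R) := invertibleOne
  simpa only [eval, invOf_one, one_pow, mul_one] using
    eval₂_reflect_mul_pow (RingHom.id R) 1 N f hf

end Polynomial

theorem stmt6_general (n : ℕ) (p q : Polynomial ℂ)
    (hcop : IsCoprime p q)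
    (hdeg : max p.natDegree q.natDegree = n)
    (h1 : p.eval 1 = q.eval 1) (hq1 : q.eval 1 ≠ 0)
    (hfun : p * p.reflect n = q * q.reflect n) :
    q = p.reflect n := by
  have hp0 : p ≠ 0 := fun hp => hq1 (by rw [← h1, hp, eval_zero])
  have hq0 : q ≠ 0 := fun hq => hq1 (by rw [hq, eval_zero])
  have hpn : p.natDegree ≤ n := hdeg ▸ le_max_left _ _
  have hqn : q.natDegree ≤ n := hdeg ▸ le_max_right _ _
  obtain ⟨a, hpa, hqa⟩ := hcop.exists_eq_mul_and_eq_mul_of_mul_eq_mul hp0 hq0 hfun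
  have ha0 : a ≠ 0 := by
    rintro rfl
    exact hp0 (reflect_eq_zero_iff.mp (by rw [hpa, mul_zero]))
  have hda : a.natDegree = 0 := by
    have hqa_le := natDegree_add_natDegree_le_of_reflect_eq_mul hpn hq0 ha0 hpa
    have hpa_le := natDegree_add_natDegree_le_of_reflect_eq_mul hqn hp0 ha0 hqa
    omega
  have hpa' : p.reflect n = q * C (a.coeff 0) := by rw [hpa, ← eq_C_of_natDegree_eq_zero hda]
  have hc : a.coeff 0 = 1 := by
    have hev := congrArg (eval 1) hpa'
    rw [eval_one_reflect hpn, eval_mul, eval_C, h1] at hev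
    exact mul_left_cancel₀ hq1 (hev.symm.trans (mul_one _).symm)
  rw [hpa', hc, C_1, mul_one]

/-- Let `n ≥ 1` and let `p, q` be coprime polynomials over `ℂ` with
`max (natDegree p) (natDegree q) = n`, `p(1) = q(1)`, `q(1) ≠ 0`, and
`p·(reflect n p) = q·(reflect n q)`. Then `q = reflect n p`. -/
theorem stmt6 (n : ℕ) (hn : 1 ≤ n) (p q : Polynomial ℂ)
    (hcop : IsCoprime p q)
    (hdeg : max p.natDegree q.natDegree = n)
    (h1 : p.eval 1 = q.eval 1) (hq1 : q.eval 1 ≠ 0)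
    (hfun : p * p.reflect n = q * q.reflect n) :
    q = p.reflect n :=
  stmt6_general n p q hcop hdeg h1 hq1 hfun
end

section
/- Let n ≥ 1, k ≥ 1 and let r_1, …, r_k ∈ ℂ with r_i ≠ 1 for all i. Define the Newton-like operator O : ℂ → ℂ by O(z) = z^n·∏_{i=1}^k (z − r_i)/(1 − r_i z) (with the convention x/0 = 0). Then O is complex-differentiable at z = 1 and its derivative there equals O'(1) = n + ∑_{j=1}^k (1 + r_j)/(1 − r_j); equivalently, writing ∏_{i=1}^k (X − r_i) = X^k + a_1 X^{k−1} + ⋯ + a_k, one has O'(1) = n + k − 2·(a_1 + 2a_2 + ⋯ + k·a_k)/(1 + a_1 + ⋯ + a_k). -/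
open Polynomial Finset

/-!
Every factor `(z - r) / (1 - r z)` equals `1` at `z = 1`, so the derivative of the product at `1`
is the sum of the derivatives of the factors, `(1 + r) / (1 - r) = 2 / (1 - r) - 1`. For the
coefficient form, `1 + a₁ + ⋯ + a_k = P(1)` and `a₁ + 2a₂ + ⋯ + k a_k = k P(1) - P'(1)`, while
`P'(1) / P(1) = ∑ 1 / (1 - rᵢ)`.
-/

theorem Finset.sum_range_succ_eq_add_sum_Icc {M : Type*} [AddCommMonoid M] (f : ℕ → M) (k : ℕ) :
    ∑ j ∈ range (k + 1), f j = f 0 + ∑ j ∈ Icc 1 k, f j := by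
  rw [range_eq_Ico, sum_eq_sum_Ico_succ_bot k.succ_pos]
  rfl

namespace Polynomial

variable {R : Type*} [CommRing R]

theorem coeff_add_sum_Icc_coeff_sub {p : R[X]} {k : ℕ} (hp : p.natDegree ≤ k) :
    p.coeff k + ∑ j ∈ Icc 1 k, p.coeff (k - j) = p.eval 1 := by
  rw [eval_eq_sum_range' (Nat.lt_succ_of_le hp), ← sum_range_reflect,
    sum_range_succ_eq_add_sum_Icc]
  simp

theorem sum_Icc_mul_coeff_sub {p : R[X]} {k : ℕ} (hp : p.natDegree ≤ k) :
    ∑ j ∈ Icc 1 k, (j : R) * p.coeff (k - j) = k * p.eval 1 - p.derivative.eval 1 := by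
  have hder : p.derivative.eval 1 = ∑ m ∈ range (k + 1), (m : R) * p.coeff m := by
    rw [derivative_eval, sum_over_range' _ (by simp) _ (Nat.lt_succ_of_le hp)]
    simp [mul_comm]
  rw [hder, eval_eq_sum_range' (Nat.lt_succ_of_le hp), mul_sum, ← sum_sub_distrib,
    ← sum_range_reflect, sum_range_succ_eq_add_sum_Icc]
  simp only [Nat.succ_sub_one, tsub_zero, one_pow, mul_one, sub_self, zero_add]
  refine sum_congr rfl fun j hj => ?_
  rw [Nat.cast_sub (mem_Icc.1 hj).2]
  ring

theorem eval_derivative_prod_X_sub_C {K ι : Type*} [Field K] [Fintype ι] (r : ι → K) {x : K}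
    (hx : ∀ i, x ≠ r i) :
    (derivative (∏ i, (X - C (r i)))).eval x = (∏ i, (x - r i)) * ∑ i, (x - r i)⁻¹ := by
  classical
  simp only [derivative_prod_finset, derivative_X_sub_C, mul_one, eval_finsetSum, eval_prod,
    eval_sub, eval_X, eval_C, mul_sum]
  refine sum_congr rfl fun i _ => ?_
  rw [← mul_prod_erase univ (fun j => x - r j) (mem_univ i), mul_comm (x - r i), mul_assoc,
    mul_inv_cancel₀ (sub_ne_zero.2 (hx i)), mul_one]

end Polynomial

section Derivatives

variable {𝕜 : Type*} [NontriviallyNormedField 𝕜]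

theorem HasDerivAt.finsetProd_of_eq_one {ι 𝔸 : Type*} [NormedCommRing 𝔸] [NormedAlgebra 𝕜 𝔸]
    {u : Finset ι} {f : ι → 𝕜 → 𝔸} {f' : ι → 𝔸} {x : 𝕜}
    (hf : ∀ i ∈ u, HasDerivAt (f i) (f' i) x) (hf₁ : ∀ i ∈ u, f i x = 1) :
    HasDerivAt (∏ i ∈ u, f i ·) (∑ i ∈ u, f' i) x := by
  classical
  convert HasDerivAt.fun_finsetProd hf using 1
  refine sum_congr rfl fun i _ => ?_
  rw [prod_eq_one fun j hj => hf₁ j (mem_of_mem_erase hj), one_smul]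

theorem hasDerivAt_sub_div_one_sub_mul {r x : 𝕜} (h : 1 - r * x ≠ 0) :
    HasDerivAt (fun z => (z - r) / (1 - r * z)) ((1 - r ^ 2) / (1 - r * x) ^ 2) x := by
  refine (((hasDerivAt_id' x).sub_const r).fun_div
    (((hasDerivAt_id' x).const_mul r).const_sub 1) h).congr_deriv ?_
  ring

theorem hasDerivAt_newtonLike_one {ι : Type*} (s : Finset ι) (n : ℕ) {r : ι → 𝕜}
    (hr : ∀ i ∈ s, r i ≠ 1) :
    HasDerivAt (fun z => z ^ n * ∏ i ∈ s, (z - r i) / (1 - r i * z))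
      (n + ∑ i ∈ s, (1 + r i) / (1 - r i)) 1 := by
  have hne : ∀ i ∈ s, 1 - r i ≠ 0 := fun i hi => sub_ne_zero.2 (hr i hi).symm
  have hfactor : ∀ i ∈ s, HasDerivAt (fun z => (z - r i) / (1 - r i * z))
      ((1 + r i) / (1 - r i)) 1 := fun i hi => by
    have h := hne i hi
    refine (hasDerivAt_sub_div_one_sub_mul (by rwa [mul_one])).congr_deriv ?_
    field_simp
    ring
  have hfactor₁ : ∀ i ∈ s, (1 - r i) / (1 - r i * 1) = 1 := fun i hi => by
    rw [mul_one, div_self (hne i hi)]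
  refine ((hasDerivAt_pow n 1).fun_mul
    (HasDerivAt.finsetProd_of_eq_one hfactor hfactor₁)).congr_deriv ?_
  rw [prod_eq_one hfactor₁]
  simp

end Derivatives

theorem stmt13_general (n k : ℕ)
    (r : Fin k → ℂ) (hr : ∀ i, r i ≠ 1)
    (P : Polynomial ℂ) (hP : P = ∏ i, (X - C (r i)))
    (O : ℂ → ℂ) (hO : ∀ z : ℂ, O z = z ^ n * ∏ i, (z - r i) / (1 - r i * z)) :
    DifferentiableAt ℂ O 1 ∧
    deriv O 1 = (n : ℂ) + ∑ j, (1 + r j) / (1 - r j) ∧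
    deriv O 1 = (n : ℂ) + (k : ℂ)
        - 2 * (∑ j ∈ Finset.Icc 1 k, (j : ℂ) * P.coeff (k - j))
            / (1 + ∑ j ∈ Finset.Icc 1 k, P.coeff (k - j)) := by
  have hO' : HasDerivAt O (n + ∑ j, (1 + r j) / (1 - r j)) 1 :=
    funext hO ▸ hasDerivAt_newtonLike_one univ n fun i _ => hr i
  refine ⟨hO'.differentiableAt, hO'.deriv, ?_⟩
  have hdeg : P.natDegree ≤ k := by simp [hP]
  have hne : ∀ j, 1 - r j ≠ 0 := fun j => sub_ne_zero.2 (hr j).symm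
  have hcoeffs : 1 + ∑ j ∈ Icc 1 k, P.coeff (k - j) = ∏ j, (1 - r j) := by
    have hk : P.coeff k = 1 := by
      simpa [hP] using (monic_prod_X_sub_C r univ).coeff_natDegree
    calc 1 + ∑ j ∈ Icc 1 k, P.coeff (k - j)
        = P.coeff k + ∑ j ∈ Icc 1 k, P.coeff (k - j) := by rw [hk]
      _ = P.eval 1 := P.coeff_add_sum_Icc_coeff_sub hdeg
      _ = ∏ j, (1 - r j) := by simp [hP, eval_prod]
  have hweighted : ∑ j ∈ Icc 1 k, (j : ℂ) * P.coeff (k - j)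
      = k * ∏ j, (1 - r j) - (∏ j, (1 - r j)) * ∑ j, (1 - r j)⁻¹ := by
    rw [P.sum_Icc_mul_coeff_sub hdeg, hP, eval_prod,
      eval_derivative_prod_X_sub_C r fun j => (hr j).symm]
    simp
  have hsum : ∑ j, (1 + r j) / (1 - r j) = 2 * ∑ j, (1 - r j)⁻¹ - k := by
    have h : ∀ j, (1 + r j) / (1 - r j) = 2 * (1 - r j)⁻¹ - 1 := fun j => by
      field_simp [hne j]
      ring
    simp [h, sum_sub_distrib, mul_sum]
  rw [hO'.deriv, hcoeffs, hweighted, hsum]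
  field_simp [prod_ne_zero_iff.2 fun j _ => hne j]
  ring

/-- Let `n, k ≥ 1` and `r₁, …, r_k ∈ ℂ` with `rᵢ ≠ 1`. The Newton-like
operator `O(z) = z^n·∏ (z − rᵢ)/(1 − rᵢz)` (with `x/0 = 0`) is complex-differentiable at
`z = 1` with `O'(1) = n + ∑ (1+r_j)/(1−r_j)`; equivalently, writing
`∏ (X − rᵢ) = X^k + a₁X^{k−1} + ⋯ + a_k`, one has
`O'(1) = n + k − 2(a₁ + 2a₂ + ⋯ + k·a_k)/(1 + a₁ + ⋯ + a_k)`. -/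
theorem stmt13 (n k : ℕ) (hn : 1 ≤ n) (hk : 1 ≤ k)
    (r : Fin k → ℂ) (hr : ∀ i, r i ≠ 1)
    (P : Polynomial ℂ) (hP : P = ∏ i, (X - C (r i)))
    (O : ℂ → ℂ) (hO : ∀ z : ℂ, O z = z ^ n * ∏ i, (z - r i) / (1 - r i * z)) :
    DifferentiableAt ℂ O 1 ∧
    deriv O 1 = (n : ℂ) + ∑ j, (1 + r j) / (1 - r j) ∧
    deriv O 1 = (n : ℂ) + (k : ℂ)
        - 2 * (∑ j ∈ Finset.Icc 1 k, (j : ℂ) * P.coeff (k - j))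
            / (1 + ∑ j ∈ Finset.Icc 1 k, P.coeff (k - j)) :=
  stmt13_general n k r hr P hP O hO
end

section
/- Let n ≥ 1, k ≥ 1 with n + k odd, let A_1, …, A_k, B_1, …, B_k ∈ ℝ and α ∈ ℂ, and let r_1, …, r_k ∈ ℂ with r_i ≠ −1 for all i, such that the coefficients a_j of P(X) = ∏_{i=1}^k (X − r_i) = X^k + a_1 X^{k−1} + ⋯ + a_k satisfy a_j = A_j + B_j·α for j = 1, …, k. Let O(z) = z^n·∏_{i=1}^k (z − r_i)/(1 − r_i z), and set C = n + k + ∑_{j=1}^k (−1)^j (n+k−2j)A_j, D = ∑_{j=1}^k (−1)^j (n+k−2j)B_j, C' = 1 + ∑_{j=1}^k (−1)^j A_j, D' = ∑_{j=1}^k (−1)^j B_j, c = (CD − C'D')/(D² − D'²), ρ = (C'D − CD')/(D² − D'²). If D² − D'² > 0, then: |O'(−1)| < 1 if and only if |α + c| < |ρ|; |O'(−1)| = 1 if and only if |α + c| = |ρ|; and |O'(−1)| > 1 if and only if |α + c| > |ρ|. That is, the fixed point z = −1 is attracting exactly inside the circle S: |α + c| = |ρ|, indifferent on S, and repelling outside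 S. -/
/-!
Away from its poles `O` is a product of `z ↦ zⁿ` and the Möbius maps `(z - rᵢ)/(1 - rᵢ z)`,
each of which sends `-1` to `-1` with derivative `(1 - rᵢ)/(1 + rᵢ)` there. Logarithmic
differentiation gives `O'(-1) = n - k - 2 P'(-1)/P(-1)`, and reading `P(-1)` and `P'(-1)` off the
coefficients `a_j = A_j + B_j α` turns this into `O'(-1) = (C + Dα)/(C' + D'α)`. Finally
`|C + Dα|² - |C' + D'α|² = (D² - D'²)(|α + c|² - ρ²)` by completing the square, so for
`D² - D'² > 0` the comparison of `|O'(-1)|` with `1` is the comparison of `|α + c|` with `|ρ|`.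
-/

open Polynomial Finset

namespace Polynomial

variable {R : Type*} [CommRing R] {p : R[X]}

theorem eval_neg_one_eq_sum_range {N : ℕ} (hN : p.natDegree < N) :
    p.eval (-1) = ∑ m ∈ range N, (-1) ^ m * p.coeff m := by
  rw [eval_eq_sum_range' hN]
  exact sum_congr rfl fun m _ => mul_comm _ _

theorem eval_derivative_neg_one_eq_sum_range {N : ℕ} (hN : p.natDegree < N) :
    p.derivative.eval (-1) = -∑ m ∈ range N, (-1) ^ m * m * p.coeff m := by
  rw [derivative_eval, sum_over_range' _ (fun _ => by simp) N hN, ← sum_neg_distrib]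
  refine sum_congr rfl fun m _ => ?_
  cases m with
  | zero => simp
  | succ m => simp only [Nat.cast_succ, pow_succ, add_tsub_cancel_right]; ring

theorem mul_eval_sub_mul_eval_derivative_neg_one (s t : R) {k : ℕ} (hk : p.natDegree ≤ k) :
    s * p.eval (-1) - t * p.derivative.eval (-1) =
      (-1) ^ k * ∑ j ∈ range (k + 1), (-1) ^ j * (s + t * (k - j)) * p.coeff (k - j) := by
  have hN : p.natDegree < k + 1 := Nat.lt_succ_of_le hk
  rw [eval_neg_one_eq_sum_range hN, eval_derivative_neg_one_eq_sum_range hN, mul_neg,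
    sub_neg_eq_add, mul_sum, mul_sum, ← sum_add_distrib, ← sum_range_reflect, mul_sum]
  refine sum_congr rfl fun j hj => ?_
  obtain ⟨m, rfl⟩ := Nat.exists_eq_add_of_le (Nat.lt_succ_iff.mp (mem_range.mp hj))
  have hsq : ((-1 : R) ^ j) * (-1) ^ j = 1 := by rw [← mul_pow]; simp
  simp only [add_tsub_cancel_right, add_tsub_cancel_left, Nat.cast_add, pow_add]
  linear_combination (-(-1) ^ m * (s + t * m) * p.coeff m) * hsq

end Polynomial

theorem Polynomial.Monic.mul_eval_sub_mul_eval_derivative_neg_one_of_coeff_affine {p : ℂ[X]}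
    (hp : p.Monic) {k : ℕ} (hdeg : p.natDegree = k) {A B : ℕ → ℝ} {α : ℂ}
    (hcoef : ∀ j ∈ Icc 1 k, p.coeff (k - j) = A j + B j * α)
    (s t : ℂ) (w : ℕ → ℝ) (hw : ∀ j : ℕ, s + t * (k - j) = w j) :
    s * p.eval (-1) - t * p.derivative.eval (-1) =
      (-1) ^ k * (↑(w 0 + ∑ j ∈ Icc 1 k, (-1) ^ j * w j * A j) +
        ↑(∑ j ∈ Icc 1 k, (-1) ^ j * w j * B j) * α) := by
  have hlead : p.coeff k = 1 := hdeg ▸ hp.coeff_natDegree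
  rw [mul_eval_sub_mul_eval_derivative_neg_one s t hdeg.le, sum_range_succ_eq_add_sum_Icc, hw 0,
    Nat.sub_zero, hlead, sum_congr rfl fun j hj => by rw [hw, hcoef j hj]]
  push_cast
  rw [sum_mul, add_assoc, ← sum_add_distrib]
  simp only [pow_zero, one_mul, mul_one, mul_add, mul_assoc]

theorem Polynomial.eval_derivative_div_eval_prod_X_sub_C {K ι : Type*} [Field K] [DecidableEq ι]
    (s : Finset ι) (r : ι → K) {x : K} (hx : ∀ i ∈ s, x ≠ r i) :
    (∏ i ∈ s, (X - C (r i))).derivative.eval x / (∏ i ∈ s, (X - C (r i))).eval x =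
      ∑ i ∈ s, 1 / (x - r i) := by
  have hne : ∀ i ∈ s, x - r i ≠ 0 := fun i hi => sub_ne_zero.mpr (hx i hi)
  rw [derivative_prod_finset, eval_finsetSum, sum_div]
  refine sum_congr rfl fun i hi => ?_
  simp only [derivative_sub, derivative_X, derivative_C, sub_zero, mul_one, eval_prod, eval_sub,
    eval_X, eval_C]
  rw [← mul_prod_erase s _ hi]
  field_simp [hne i hi, prod_ne_zero_iff.mpr fun j hj => hne j (mem_of_mem_erase hj)]

theorem Polynomial.eval_prod_X_sub_C_ne_zero {R ι : Type*} [CommRing R] [IsDomain R]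
    (s : Finset ι) (r : ι → R) {x : R} (hx : ∀ i ∈ s, x ≠ r i) :
    (∏ i ∈ s, (X - C (r i))).eval x ≠ 0 := by
  rw [eval_prod]
  exact prod_ne_zero_iff.mpr fun i hi => by simpa [sub_eq_zero] using hx i hi

theorem mobius_apply_neg_one {r : ℂ} (hr : r ≠ -1) : (-1 - r) / (1 - r * -1) = -1 := by
  have hr' : 1 + r ≠ 0 := fun h => hr (eq_neg_of_add_eq_zero_right h)
  rw [div_eq_iff (by rwa [mul_neg_one, sub_neg_eq_add])]
  ring

theorem hasDerivAt_mobius_neg_one {r : ℂ} (hr : r ≠ -1) :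
    HasDerivAt (fun z => (z - r) / (1 - r * z)) ((1 - r) / (1 + r)) (-1) := by
  have hr' : 1 + r ≠ 0 := fun h => hr (eq_neg_of_add_eq_zero_right h)
  have hden : 1 - r * -1 ≠ 0 := by rwa [mul_neg_one, sub_neg_eq_add]
  refine (((hasDerivAt_id' (-1 : ℂ)).sub_const r).fun_div
    (((hasDerivAt_id' (-1 : ℂ)).const_mul r).const_sub 1) hden).congr_deriv ?_
  rw [div_eq_div_iff (pow_ne_zero 2 hden) hr']
  ring

section NewtonLike

variable {ι : Type*} {s : Finset ι} {n : ℕ} {r : ι → ℂ}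

theorem deriv_newtonLike_neg_one (hodd : Odd (n + #s)) (hr : ∀ i ∈ s, r i ≠ -1) :
    deriv (fun z => z ^ n * ∏ i ∈ s, (z - r i) / (1 - r i * z)) (-1) =
      n + ∑ i ∈ s, (1 - r i) / (1 + r i) := by
  have hval : ∀ i ∈ s, (-1 - r i) / (1 - r i * -1) = -1 :=
    fun i hi => mobius_apply_neg_one (hr i hi)
  have hprod : ∏ i ∈ s, (-1 - r i) / (1 - r i * -1) = (-1) ^ #s := by
    rw [prod_congr rfl hval, prod_const]
  have hd : ∀ i ∈ s,
      HasDerivAt (fun z => (z - r i) / (1 - r i * z)) ((1 - r i) / (1 + r i)) (-1) :=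
    fun i hi => hasDerivAt_mobius_neg_one (hr i hi)
  -- `O(-1) = (-1)^(n + #s) = -1`, so `O'(-1) = -logDeriv O (-1)`.
  have hlog := logDeriv_mul (f := fun z : ℂ => z ^ n)
    (g := fun z => ∏ i ∈ s, (z - r i) / (1 - r i * z)) (-1) (by simp) (by rw [hprod]; simp)
    (by fun_prop) (DifferentiableAt.fun_finsetProd fun i hi => (hd i hi).differentiableAt)
  rw [logDeriv_prod (fun i hi => by rw [hval i hi]; simp) fun i hi => (hd i hi).differentiableAt,
    logDeriv_pow, logDeriv_apply, hprod, ← pow_add, hodd.neg_one_pow,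
    sum_congr rfl fun i hi => by rw [logDeriv_apply, (hd i hi).deriv, hval i hi]] at hlog
  simp only [div_neg, div_one, sum_neg_distrib] at hlog
  linear_combination -hlog

theorem deriv_newtonLike_neg_one_eq_div [DecidableEq ι] (hodd : Odd (n + #s))
    (hr : ∀ i ∈ s, r i ≠ -1) :
    deriv (fun z => z ^ n * ∏ i ∈ s, (z - r i) / (1 - r i * z)) (-1) =
      ((n - #s) * (∏ i ∈ s, (X - C (r i))).eval (-1) -
        2 * (∏ i ∈ s, (X - C (r i))).derivative.eval (-1)) /
        (∏ i ∈ s, (X - C (r i))).eval (-1) := by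
  have hne : ∀ i ∈ s, (-1 : ℂ) ≠ r i := fun i hi h => hr i hi h.symm
  have hterm : ∀ i ∈ s, (1 - r i) / (1 + r i) = -1 - 2 * (1 / (-1 - r i)) := fun i hi => by
    have : (1 : ℂ) + r i ≠ 0 := fun h => hr i hi (eq_neg_of_add_eq_zero_right h)
    have : (-1 : ℂ) - r i ≠ 0 := sub_ne_zero.mpr (hne i hi)
    field_simp
    ring
  rw [sub_div, mul_div_cancel_right₀ _ (eval_prod_X_sub_C_ne_zero s r hne), mul_div_assoc,
    eval_derivative_div_eval_prod_X_sub_C s r hne, deriv_newtonLike_neg_one hodd hr,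
    sum_congr rfl hterm, sum_sub_distrib, ← mul_sum, sum_const, nsmul_eq_mul]
  ring

end NewtonLike

theorem Complex.normSq_add_mul_sub_normSq_add_mul (C D C' D' : ℝ) (α : ℂ)
    (hK : D ^ 2 - D' ^ 2 ≠ 0) :
    Complex.normSq (C + D * α) - Complex.normSq (C' + D' * α) =
      (D ^ 2 - D' ^ 2) * (Complex.normSq (α + ((C * D - C' * D') / (D ^ 2 - D' ^ 2) : ℝ)) -
        ((C' * D - C * D') / (D ^ 2 - D' ^ 2)) ^ 2) := by
  simp only [Complex.normSq_apply, Complex.add_re, Complex.add_im, Complex.mul_re,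
    Complex.mul_im, Complex.ofReal_re, Complex.ofReal_im]
  field_simp
  ring

theorem cmp_norm_div_one_eq (C D C' D' : ℝ) (α : ℂ) (hK : 0 < D ^ 2 - D' ^ 2)
    (hv : (C' : ℂ) + D' * α ≠ 0) :
    cmp ‖(C + D * α) / (C' + D' * α)‖ 1 =
      cmp ‖α + ((C * D - C' * D') / (D ^ 2 - D' ^ 2) : ℝ)‖
        |(C' * D - C * D') / (D ^ 2 - D' ^ 2)| := by
  have hsq {x y : ℝ} (hx : 0 ≤ x) (hy : 0 ≤ y) : cmp (x ^ 2) (y ^ 2) = cmp x y :=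
    (pow_left_strictMonoOn₀ two_ne_zero).cmp_map_eq hx hy
  rw [norm_div, ← cmp_mul_pos_right (norm_pos_iff.mpr hv),
    div_mul_cancel₀ _ (norm_ne_zero_iff.mpr hv), one_mul,
    ← hsq (norm_nonneg _) (norm_nonneg _), ← hsq (norm_nonneg _) (abs_nonneg _),
    Complex.sq_norm, Complex.sq_norm, Complex.sq_norm, sq_abs, ← cmp_sub_zero,
    Complex.normSq_add_mul_sub_normSq_add_mul _ _ _ _ _ hK.ne', ← mul_zero (D ^ 2 - D' ^ 2),
    cmp_mul_pos_left hK, cmp_sub_zero]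

theorem lt_iff_and_eq_iff_and_gt_iff_of_cmp_eq {α β : Type*} [LinearOrder α] [LinearOrder β]
    {a b : α} {c d : β} (h : cmp a b = cmp c d) :
    (a < b ↔ c < d) ∧ (a = b ↔ c = d) ∧ (a > b ↔ c > d) := by
  refine ⟨?_, ?_, ?_⟩
  · rw [← cmp_eq_lt_iff (x := a), h, cmp_eq_lt_iff]
  · rw [← cmp_eq_eq_iff (x := a), h, cmp_eq_eq_iff]
  · rw [gt_iff_lt, ← cmp_eq_gt_iff (x := a), h, cmp_eq_gt_iff]

theorem stmt18_general (n k : ℕ) (hodd : Odd (n + k))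
    (A B : ℕ → ℝ) (α : ℂ)
    (r : Fin k → ℂ) (hr : ∀ i, r i ≠ -1)
    (P : Polynomial ℂ) (hP : P = ∏ i, (X - C (r i)))
    (hcoef : ∀ j ∈ Finset.Icc 1 k, P.coeff (k - j) = (A j : ℂ) + (B j : ℂ) * α)
    (O : ℂ → ℂ) (hO : ∀ z : ℂ, O z = z ^ n * ∏ i, (z - r i) / (1 - r i * z))
    (Cbig Dbig C' D' c ρ : ℝ)
    (hCbig : Cbig = (n : ℝ) + (k : ℝ)
        + ∑ j ∈ Finset.Icc 1 k, (-1 : ℝ) ^ j * ((n : ℝ) + (k : ℝ) - 2 * (j : ℝ)) * A j)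
    (hDbig : Dbig = ∑ j ∈ Finset.Icc 1 k, (-1 : ℝ) ^ j * ((n : ℝ) + (k : ℝ) - 2 * (j : ℝ)) * B j)
    (hC' : C' = 1 + ∑ j ∈ Finset.Icc 1 k, (-1 : ℝ) ^ j * A j)
    (hD' : D' = ∑ j ∈ Finset.Icc 1 k, (-1 : ℝ) ^ j * B j)
    (hc : c = (Cbig * Dbig - C' * D') / (Dbig ^ 2 - D' ^ 2))
    (hρ : ρ = (C' * Dbig - Cbig * D') / (Dbig ^ 2 - D' ^ 2))
    (hDpos : Dbig ^ 2 - D' ^ 2 > 0) :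
    (‖deriv O (-1)‖ < 1 ↔ ‖α + (c : ℂ)‖ < |ρ|) ∧
    (‖deriv O (-1)‖ = 1 ↔ ‖α + (c : ℂ)‖ = |ρ|) ∧
    (‖deriv O (-1)‖ > 1 ↔ ‖α + (c : ℂ)‖ > |ρ|) := by
  have hmonic : P.Monic := hP ▸ monic_prod_of_monic _ _ fun i _ => monic_X_sub_C (r i)
  have hdeg : P.natDegree = k := by
    rw [hP, natDegree_prod_of_monic _ _ fun i _ => monic_X_sub_C (r i)]
    simp
  have hV := hmonic.mul_eval_sub_mul_eval_derivative_neg_one_of_coeff_affine hdeg hcoef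
    1 0 (fun _ => 1) (by simp)
  simp only [one_mul, zero_mul, sub_zero, mul_one, ← hC', ← hD'] at hV
  have hU := hmonic.mul_eval_sub_mul_eval_derivative_neg_one_of_coeff_affine hdeg hcoef
    (n - k) 2 (fun j => n + k - 2 * j) (fun j => by push_cast; ring)
  simp only [Nat.cast_zero, mul_zero, sub_zero, ← hCbig, ← hDbig] at hU
  have hv : (C' : ℂ) + D' * α ≠ 0 := fun h => by
    refine eval_prod_X_sub_C_ne_zero univ r (x := -1) (fun i _ h' => hr i h'.symm) ?_
    rw [← hP, hV, h, mul_zero]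
  have hderiv : deriv O (-1) = (Cbig + Dbig * α) / (C' + D' * α) := by
    rw [funext hO, deriv_newtonLike_neg_one_eq_div (by rwa [card_fin]) fun i _ => hr i, card_fin,
      ← hP, hU, hV, mul_div_mul_left _ _ (pow_ne_zero k (neg_ne_zero.mpr one_ne_zero))]
  have hcmp := cmp_norm_div_one_eq Cbig Dbig C' D' α hDpos hv
  rw [← hderiv, ← hc, ← hρ] at hcmp
  exact lt_iff_and_eq_iff_and_gt_iff_of_cmp_eq hcmp

/-- Stability of the fixed point `z = −1` (here `n + k` is odd) of the
Newton-like operator `O(z) = z^n·∏ (z − rᵢ)/(1 − rᵢz)` when the coefficients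
`a_j = coeff (k−j)` of `P(X) = ∏ (X − rᵢ)` depend linearly on `α`: `a_j = A_j + B_j·α`.
With `C = n+k+∑(−1)^j(n+k−2j)A_j`, `D = ∑(−1)^j(n+k−2j)B_j`, `C' = 1+∑(−1)^jA_j`,
`D' = ∑(−1)^jB_j`, `c = (CD−C'D')/(D²−D'²)`, `ρ = (C'D−CD')/(D²−D'²)`, if `D²−D'² > 0`
then `z = −1` is attracting iff `|α+c| < |ρ|`, indifferent iff `|α+c| = |ρ|`, repelling
iff `|α+c| > |ρ|`. -/
theorem stmt18 (n k : ℕ) (hn : 1 ≤ n) (hk : 1 ≤ k) (hodd : Odd (n + k))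
    (A B : ℕ → ℝ) (α : ℂ)
    (r : Fin k → ℂ) (hr : ∀ i, r i ≠ -1)
    (P : Polynomial ℂ) (hP : P = ∏ i, (X - C (r i)))
    (hcoef : ∀ j ∈ Finset.Icc 1 k, P.coeff (k - j) = (A j : ℂ) + (B j : ℂ) * α)
    (O : ℂ → ℂ) (hO : ∀ z : ℂ, O z = z ^ n * ∏ i, (z - r i) / (1 - r i * z))
    (Cbig Dbig C' D' c ρ : ℝ)
    (hCbig : Cbig = (n : ℝ) + (k : ℝ)
        + ∑ j ∈ Finset.Icc 1 k, (-1 : ℝ) ^ j * ((n : ℝ) + (k : ℝ) - 2 * (j : ℝ)) * A j)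
    (hDbig : Dbig = ∑ j ∈ Finset.Icc 1 k, (-1 : ℝ) ^ j * ((n : ℝ) + (k : ℝ) - 2 * (j : ℝ)) * B j)
    (hC' : C' = 1 + ∑ j ∈ Finset.Icc 1 k, (-1 : ℝ) ^ j * A j)
    (hD' : D' = ∑ j ∈ Finset.Icc 1 k, (-1 : ℝ) ^ j * B j)
    (hc : c = (Cbig * Dbig - C' * D') / (Dbig ^ 2 - D' ^ 2))
    (hρ : ρ = (C' * Dbig - Cbig * D') / (Dbig ^ 2 - D' ^ 2))
    (hDpos : Dbig ^ 2 - D' ^ 2 > 0) :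
    (‖deriv O (-1)‖ < 1 ↔ ‖α + (c : ℂ)‖ < |ρ|) ∧
    (‖deriv O (-1)‖ = 1 ↔ ‖α + (c : ℂ)‖ = |ρ|) ∧
    (‖deriv O (-1)‖ > 1 ↔ ‖α + (c : ℂ)‖ > |ρ|) :=
  stmt18_general n k hodd A B α r hr P hP hcoef O hO Cbig Dbig C' D' c ρ hCbig hDbig hC' hD' hc hρ
    hDpos
end

section
/- Let n ≥ 1, let a_1, …, a_{n−1} ∈ ℝ and α ∈ ℂ, and let r_1, …, r_n ∈ ℂ with r_i ≠ 1 for all i, such that ∏_{i=1}^n (X − r_i) = X^n + a_1 X^{n−1} + ⋯ + a_{n−1} X + α (i.e. the coefficient of X^{n−j} is a_j for j = 1, …, n−1 and the constant coefficient is α). Define O(z) = z^n·∏_{i=1}^n (z − r_i)/(1 − r_i z), and set A = 2n + 2∑_{j=1}^{n−1} (n−j)a_j and A' = 1 + ∑_{j=1}^{n−1} a_j. Then O'(1) = A/(A' + α), and consequently: the fixed point z = 1 is attracting (|O'(1)| < 1) if and only if |α + A'| > |A|; indifferent (|O'(1)| = 1) if and only if |α + A'| = |A|; and repelling (|O'(1)|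 > 1) if and only if |α + A'| < |A|. Moreover, if A = 0 then O'(1) = 0, i.e. z = 1 is superattracting. -/
/-!
Each factor `z (z - r) / (1 - r z)` of `O` takes the value `1` at `z = 1` with derivative
`2 / (1 - r)`, so `O'(1) = 2 ∑ 1 / (1 - rᵢ) = 2 P'(1) / P(1)`, the logarithmic derivative of `P`
at `1`. Reading `P(1)` and `P'(1)` off the coefficients gives `P(1) = A' + α` and
`P'(1) = A / 2`; the classification of the fixed point is then `|O'(1)| = |A| / |A' + α|`.
-/

open Polynomial Finset

theorem Finset.sum_range_succ_eq_add_sum_Icc_add {M : Type*} [AddCommMonoid M] (f : ℕ → M)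
    {n : ℕ} (hn : 1 ≤ n) :
    ∑ j ∈ range (n + 1), f j = f 0 + ∑ j ∈ Icc 1 (n - 1), f j + f n := by
  obtain ⟨m, rfl⟩ := Nat.exists_eq_add_of_le' hn
  rw [sum_range_succ, sum_range_succ', Nat.add_sub_cancel, ← Ico_add_one_right_eq_Icc,
    sum_Ico_eq_sum_range, add_comm (∑ j ∈ range m, f (j + 1))]
  simp [add_comm]

namespace Polynomial

variable {R : Type*} [Semiring R] {p : R[X]} {n : ℕ}

theorem eval_one_eq_sum_range_coeff_sub (hp : p.natDegree ≤ n) :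
    p.eval 1 = ∑ j ∈ range (n + 1), p.coeff (n - j) := by
  rw [eval_eq_sum_range' (Nat.lt_succ_of_le hp), ← sum_range_reflect]
  simp

theorem eval_one_derivative_eq_sum_range_coeff_sub (hp : p.natDegree ≤ n) :
    p.derivative.eval 1 = ∑ j ∈ range (n + 1), p.coeff (n - j) * (n - j : ℕ) := by
  rw [derivative_eval, sum_over_range' _ (by simp) _ (Nat.lt_succ_of_le hp), ← sum_range_reflect]
  simp

theorem Monic.eval_one_eq_add_sum_coeff (hp : p.Monic) (hdeg : p.natDegree = n) (hn : 1 ≤ n) :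
    p.eval 1 = 1 + ∑ j ∈ Icc 1 (n - 1), p.coeff (n - j) + p.coeff 0 := by
  rw [eval_one_eq_sum_range_coeff_sub hdeg.le, sum_range_succ_eq_add_sum_Icc_add _ hn,
    Nat.sub_zero, Nat.sub_self, ← hdeg, hp.coeff_natDegree]

theorem Monic.eval_one_derivative_eq_add_sum_coeff {R : Type*} [Ring R] {p : R[X]}
    (hp : p.Monic) (hdeg : p.natDegree = n) (hn : 1 ≤ n) :
    p.derivative.eval 1 = n + ∑ j ∈ Icc 1 (n - 1), ((n : R) - j) * p.coeff (n - j) := by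
  rw [eval_one_derivative_eq_sum_range_coeff_sub hdeg.le, sum_range_succ_eq_add_sum_Icc_add _ hn,
    Nat.sub_zero, Nat.sub_self, ← hdeg, hp.coeff_natDegree, hdeg, Nat.cast_zero, mul_zero,
    add_zero, one_mul]
  refine congrArg ((n : R) + ·) (sum_congr rfl fun j hj => ?_)
  rw [← (Nat.cast_commute _ _).eq, Nat.cast_sub ((mem_Icc.mp hj).2.trans (Nat.sub_le n 1))]

theorem eval_derivative_div_eval_prod_X_sub_C_s19 {𝕜 ι : Type*} [NontriviallyNormedField 𝕜]
    [Fintype ι] (r : ι → 𝕜) {x : 𝕜} (hx : ∀ i, x ≠ r i) :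
    (∏ i, (X - C (r i))).derivative.eval x / (∏ i, (X - C (r i))).eval x =
      ∑ i, 1 / (x - r i) := by
  have h := logDeriv_prod (s := univ) (f := fun i z => z - r i) (x := x)
    (fun i _ => sub_ne_zero.mpr (hx i)) (fun i _ => differentiableAt_id.sub_const _)
  simpa only [eval_prod, eval_sub, eval_X, eval_C, ← Polynomial.deriv, logDeriv_apply,
    deriv_sub_const, deriv_id''] using h

end Polynomial

section Derivatives

variable {𝕜 ι : Type*} [NontriviallyNormedField 𝕜] [Fintype ι]

theorem HasDerivAt.fun_finsetProd_of_eq_one [DecidableEq ι] {f : ι → 𝕜 → 𝕜}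
    {f' : ι → 𝕜} {x : 𝕜} (hf : ∀ i, HasDerivAt (f i) (f' i) x) (h1 : ∀ i, f i x = 1) :
    HasDerivAt (fun z => ∏ i, f i z) (∑ i, f' i) x := by
  simpa [h1] using HasDerivAt.fun_finsetProd (u := univ) fun i _ => hf i

theorem hasDerivAt_mul_sub_div_one_sub_mul {r : 𝕜} (hr : r ≠ 1) :
    HasDerivAt (fun z => z * ((z - r) / (1 - r * z))) (2 / (1 - r)) 1 := by
  have hr' : 1 - r * 1 ≠ 0 := by rw [mul_one, sub_ne_zero]; exact hr.symm
  refine ((hasDerivAt_id' (1 : 𝕜)).fun_mul (((hasDerivAt_id' 1).sub_const r).fun_div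
    (((hasDerivAt_id' 1).const_mul r).const_sub 1) hr')).congr_deriv ?_
  rw [mul_one] at hr' ⊢
  field_simp
  ring

theorem hasDerivAt_pow_card_mul_prod_sub_div_one_sub_mul {r : ι → 𝕜} (hr : ∀ i, r i ≠ 1) :
    HasDerivAt (fun z => z ^ Fintype.card ι * ∏ i, (z - r i) / (1 - r i * z))
      (2 * ∑ i, 1 / (1 - r i)) 1 := by
  classical
  have hprod := HasDerivAt.fun_finsetProd_of_eq_one
    (fun i => hasDerivAt_mul_sub_div_one_sub_mul (hr i))
    fun i => by simp [div_self (sub_ne_zero.mpr (hr i).symm)]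
  simp only [prod_mul_distrib, prod_const, card_univ] at hprod
  simpa only [mul_sum, mul_one_div] using hprod

end Derivatives

/-- The case `n = k`: the Newton-like operator
`O(z) = z^n·∏ (z − rᵢ)/(1 − rᵢz)` with `∏ (X − rᵢ) = X^n + a₁X^{n−1} + ⋯ + a_{n−1}X + α`,
where `a₁, …, a_{n−1} ∈ ℝ` and `α ∈ ℂ`. With `A = 2n + 2∑_{j=1}^{n−1}(n−j)a_j` and
`A' = 1 + ∑_{j=1}^{n−1}a_j`: `O'(1) = A/(A'+α)`; hence `z = 1` is attracting iff
`|α+A'| > |A|`, indifferent iff `|α+A'| = |A|`, repelling iff `|α+A'| < |A|`; and if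
`A = 0` then `O'(1) = 0` (superattracting). -/
theorem stmt19 (n : ℕ) (hn : 1 ≤ n)
    (a : ℕ → ℝ) (α : ℂ)
    (r : Fin n → ℂ) (hr : ∀ i, r i ≠ 1)
    (P : Polynomial ℂ) (hP : P = ∏ i, (X - C (r i)))
    (hcoef : ∀ j ∈ Finset.Icc 1 (n - 1), P.coeff (n - j) = (a j : ℂ))
    (hconst : P.coeff 0 = α)
    (O : ℂ → ℂ) (hO : ∀ z : ℂ, O z = z ^ n * ∏ i, (z - r i) / (1 - r i * z))
    (A A' : ℝ)
    (hA : A = 2 * (n : ℝ) + 2 * ∑ j ∈ Finset.Icc 1 (n - 1), ((n : ℝ) - (j : ℝ)) * a j)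
    (hA' : A' = 1 + ∑ j ∈ Finset.Icc 1 (n - 1), a j) :
    deriv O 1 = (A : ℂ) / ((A' : ℂ) + α) ∧
    (‖deriv O 1‖ < 1 ↔ ‖α + (A' : ℂ)‖ > |A|) ∧
    (‖deriv O 1‖ = 1 ↔ ‖α + (A' : ℂ)‖ = |A|) ∧
    (‖deriv O 1‖ > 1 ↔ ‖α + (A' : ℂ)‖ < |A|) ∧
    (A = 0 → deriv O 1 = 0) := by
  have hmonic : P.Monic := hP ▸ monic_prod_X_sub_C r univ
  have hdeg : P.natDegree = n := by
    simp [hP, natDegree_prod_of_monic _ _ fun i _ => monic_X_sub_C (r i)]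
  have hP1 : P.eval 1 = A' + α := by
    rw [hmonic.eval_one_eq_add_sum_coeff hdeg hn, sum_congr rfl hcoef, hconst, hA']
    push_cast
    ring
  have hP'1 : P.derivative.eval 1 = A / 2 := by
    rw [hmonic.eval_one_derivative_eq_add_sum_coeff hdeg hn,
      sum_congr rfl fun j hj => by rw [hcoef j hj], hA]
    push_cast
    ring
  have hP1_ne : P.eval 1 ≠ 0 := by
    simp [hP, eval_prod, prod_ne_zero_iff, sub_eq_zero, fun i => (hr i).symm]
  have hderiv : deriv O 1 = A / (A' + α) := by
    have hO' := hasDerivAt_pow_card_mul_prod_sub_div_one_sub_mul hr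
    rw [Fintype.card_fin, ← funext hO,
      ← eval_derivative_div_eval_prod_X_sub_C_s19 r fun i => (hr i).symm, ← hP, hP1, hP'1] at hO'
    rw [hO'.deriv]
    ring
  have hnorm : ‖deriv O 1‖ = |A| / ‖α + A'‖ := by
    rw [hderiv, norm_div, Complex.norm_real, Real.norm_eq_abs, add_comm α]
  have hpos : 0 < ‖α + A'‖ := norm_pos_iff.mpr (by rwa [add_comm, ← hP1])
  refine ⟨hderiv, ?_, ?_, ?_, fun hA0 => by rw [hderiv, hA0]; simp⟩
  · rw [hnorm, div_lt_one hpos]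
  · rw [hnorm, div_eq_one_iff_eq hpos.ne', eq_comm]
  · rw [hnorm, gt_iff_lt, one_lt_div hpos]
end
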